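/- Let λ, σ be nonzero complex numbers and η a complex number. Define operators on ℂ[X,Y]: L_m f(X,Y) = λ^m (Y - mX + mη) f(X, Y-m), H_m f(X,Y) = λ^m X f(X, Y-m), I_m f(X,Y) = λ^m σ f(X-1, Y-m), J_m f = 0, for m ∈ ℤ. Then these operators satisfy the planar Galilean conformal algebra relations: [L_m, L_n] = (n-m)L_{m+n}, [L_m, H_n] = n H_{m+n}, [L_m, I_n] = (n-m) I_{m+n}, [H_m, I_n] = I_{m+n}, and [H_m, H_n] = [I_m, I_n] = 0 as operators on ℂ[X,Y]. -/

import Mathlib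

open MvPolynomial

/-- Substitution `f(X,Y) ↦ f(X, Y-m)` on `ℂ[X,Y]`, as a linear map. -/
noncomputable def subYm (m : ℂ) : MvPolynomial (Fin 2) ℂ →ₗ[ℂ] MvPolynomial (Fin 2) ℂ :=
  (aeval ![X 0, X 1 - C m] : MvPolynomial (Fin 2) ℂ →ₐ[ℂ] MvPolynomial (Fin 2) ℂ).toLinearMap

/-- Substitution `f(X,Y) ↦ f(X-1, Y-m)` on `ℂ[X,Y]`, as a linear map. -/
noncomputable def subXYm (m : ℂ) : MvPolynomial (Fin 2) ℂ →ₗ[ℂ] MvPolynomial (Fin 2) ℂ :=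
  (aeval ![X 0 - 1, X 1 - C m] : MvPolynomial (Fin 2) ℂ →ₐ[ℂ] MvPolynomial (Fin 2) ℂ).toLinearMap

/-- `L_m f(X,Y) = λ^m (Y - mX + mη) f(X, Y-m)`. -/
noncomputable def opL (lam eta : ℂ) (m : ℤ) :
    MvPolynomial (Fin 2) ℂ →ₗ[ℂ] MvPolynomial (Fin 2) ℂ :=
  lam ^ m • (LinearMap.mulLeft ℂ (X 1 - (m : ℂ) • X 0 + C ((m : ℂ) * eta)) ∘ₗ subYm (m : ℂ))

/-- `H_m f(X,Y) = λ^m X f(X, Y-m)`. -/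
noncomputable def opH (lam : ℂ) (m : ℤ) :
    MvPolynomial (Fin 2) ℂ →ₗ[ℂ] MvPolynomial (Fin 2) ℂ :=
  lam ^ m • (LinearMap.mulLeft ℂ (X 0) ∘ₗ subYm (m : ℂ))

/-- `I_m f(X,Y) = λ^m σ f(X-1, Y-m)`. -/
noncomputable def opI (lam sig : ℂ) (m : ℤ) :
    MvPolynomial (Fin 2) ℂ →ₗ[ℂ] MvPolynomial (Fin 2) ℂ :=
  (lam ^ m * sig) • subXYm (m : ℂ)

/-!
Each of `L_m`, `H_m`, `I_m` is a weighted translation `f ↦ p · f(X - a, Y - b)`. Translations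
are commuting algebra automorphisms of `ℂ[X,Y]` whose vectors add under composition, so the
commutator of the weighted translations by `(p, v)` and `(q, w)` is the weighted translation by
`v + w` with weight `p · q(· - v) - q · p(· - w)`. Every relation thus reduces to a polynomial
identity in the weights, together with `λ^m λ^n = λ^(m+n)`.
-/

section Commutator

variable {R A : Type*} [CommSemiring R] [CommRing A] [Algebra R A]

open LinearMap in
theorem LinearMap.mulLeft_comp_algHom_commutator (p q r : A) {φ ψ χ : A →ₐ[R] A}
    (hφψ : φ.comp ψ = χ) (hψφ : ψ.comp φ = χ) (hr : p * φ q - q * ψ p = r) :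
    (mulLeft R p ∘ₗ φ.toLinearMap) ∘ₗ (mulLeft R q ∘ₗ ψ.toLinearMap)
        - (mulLeft R q ∘ₗ ψ.toLinearMap) ∘ₗ (mulLeft R p ∘ₗ φ.toLinearMap)
      = mulLeft R r ∘ₗ χ.toLinearMap := by
  ext f
  have hφψf : φ (ψ f) = χ f := DFunLike.congr_fun hφψ f
  have hψφf : ψ (φ f) = χ f := DFunLike.congr_fun hψφ f
  simp only [sub_apply, comp_apply, mulLeft_apply, AlgHom.toLinearMap_apply, map_mul,
    hφψf, hψφf, ← hr]
  ring

end Commutator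

namespace MvPolynomial

variable {σ R : Type*} [CommRing R]

noncomputable def shift (v : σ → R) : MvPolynomial σ R →ₐ[R] MvPolynomial σ R :=
  aeval fun i => X i - C (v i)

@[simp]
theorem shift_X (v : σ → R) (i : σ) : shift v (X i) = X i - C (v i) := aeval_X _ _

@[simp]
theorem shift_C (v : σ → R) (a : R) : shift v (C a) = C a := aeval_C _ _

theorem shift_comp_shift (v w : σ → R) :
    (shift v).comp (shift w) = shift (v + w) := by
  refine algHom_ext fun i => ?_
  simp only [AlgHom.comp_apply, shift_X, map_sub, shift_C, Pi.add_apply, C_add]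
  ring

noncomputable def weightedShift (p : MvPolynomial σ R) (v : σ → R) :
    MvPolynomial σ R →ₗ[R] MvPolynomial σ R :=
  LinearMap.mulLeft R p ∘ₗ (shift v).toLinearMap

theorem smul_weightedShift (c : R) (p : MvPolynomial σ R) (v : σ → R) :
    c • weightedShift p v = weightedShift (C c * p) v := by
  ext f
  simp [weightedShift, smul_eq_C_mul]

@[simp]
theorem weightedShift_zero (v : σ → R) : weightedShift (0 : MvPolynomial σ R) v = 0 := by
  simp [weightedShift]

theorem weightedShift_commutator {p q r : MvPolynomial σ R} {v w u : σ → R} (hu : v + w = u)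
    (hr : p * shift v q - q * shift w p = r) :
    weightedShift p v ∘ₗ weightedShift q w - weightedShift q w ∘ₗ weightedShift p v
      = weightedShift r u :=
  LinearMap.mulLeft_comp_algHom_commutator p q r (by rw [shift_comp_shift, hu])
    (by rw [shift_comp_shift, add_comm, hu]) hr

end MvPolynomial

section

variable {lam eta sig : ℂ}

theorem subYm_eq (m : ℂ) : subYm m = (shift ![0, m]).toLinearMap := by
  rw [subYm, shift]
  congr
  ext i
  fin_cases i <;> simp

theorem subXYm_eq (m : ℂ) : subXYm m = (shift ![1, m]).toLinearMap := by
  rw [subXYm, shift]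
  congr
  ext i
  fin_cases i <;> simp

theorem opL_eq (m : ℤ) : opL lam eta m
    = weightedShift (C (lam ^ m) * (X 1 - (m : ℂ) • X 0 + C (m * eta))) ![0, (m : ℂ)] := by
  rw [opL, subYm_eq, ← smul_weightedShift]
  rfl

theorem opH_eq (m : ℤ) : opH lam m = weightedShift (C (lam ^ m) * X 0) ![0, (m : ℂ)] := by
  rw [opH, subYm_eq, ← smul_weightedShift]
  rfl

theorem opI_eq (m : ℤ) : opI lam sig m = weightedShift (C (lam ^ m * sig)) ![1, (m : ℂ)] := by
  rw [opI, subXYm_eq, ← mul_one (C _), ← smul_weightedShift, weightedShift,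
    LinearMap.mulLeft_one]
  rfl

theorem opL_commutator_opL (hlam : lam ≠ 0) (m n : ℤ) :
    opL lam eta m ∘ₗ opL lam eta n - opL lam eta n ∘ₗ opL lam eta m
      = ((n : ℂ) - (m : ℂ)) • opL lam eta (m + n) := by
  rw [opL_eq, opL_eq, opL_eq, smul_weightedShift]
  refine weightedShift_commutator (by simp) ?_
  simp only [map_add, map_sub, map_mul, shift_C, shift_X, Matrix.cons_val_zero,
    Matrix.cons_val_one, Matrix.cons_val_fin_one, C_0, sub_zero, smul_eq_C_mul, zpow_add₀ hlam,
    Int.cast_add]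
  ring

theorem opL_commutator_opH (hlam : lam ≠ 0) (m n : ℤ) :
    opL lam eta m ∘ₗ opH lam n - opH lam n ∘ₗ opL lam eta m
      = (n : ℂ) • opH lam (m + n) := by
  rw [opL_eq, opH_eq, opH_eq, smul_weightedShift]
  refine weightedShift_commutator (by simp) ?_
  simp only [map_add, map_sub, map_mul, shift_C, shift_X, Matrix.cons_val_zero,
    Matrix.cons_val_one, Matrix.cons_val_fin_one, C_0, sub_zero, smul_eq_C_mul, zpow_add₀ hlam]
  ring

theorem opL_commutator_opI (hlam : lam ≠ 0) (m n : ℤ) :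
    opL lam eta m ∘ₗ opI lam sig n - opI lam sig n ∘ₗ opL lam eta m
      = ((n : ℂ) - (m : ℂ)) • opI lam sig (m + n) := by
  rw [opL_eq, opI_eq, opI_eq, smul_weightedShift]
  refine weightedShift_commutator (by simp) ?_
  simp only [map_add, map_sub, map_mul, shift_C, shift_X, Matrix.cons_val_zero,
    Matrix.cons_val_one, Matrix.cons_val_fin_one, C_1, smul_eq_C_mul, zpow_add₀ hlam]
  ring

theorem opH_commutator_opI (hlam : lam ≠ 0) (m n : ℤ) :
    opH lam m ∘ₗ opI lam sig n - opI lam sig n ∘ₗ opH lam m = opI lam sig (m + n) := by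
  rw [opH_eq, opI_eq, opI_eq]
  refine weightedShift_commutator (by simp) ?_
  simp only [map_mul, shift_C, shift_X, Matrix.cons_val_zero, C_1, zpow_add₀ hlam]
  ring

theorem opH_commutator_opH (m n : ℤ) :
    opH lam m ∘ₗ opH lam n - opH lam n ∘ₗ opH lam m = 0 := by
  rw [opH_eq, opH_eq, ← weightedShift_zero]
  refine weightedShift_commutator rfl ?_
  simp only [map_mul, shift_C, shift_X, Matrix.cons_val_zero, C_0, sub_zero]
  ring

theorem opI_commutator_opI (m n : ℤ) :
    opI lam sig m ∘ₗ opI lam sig n - opI lam sig n ∘ₗ opI lam sig m = 0 := by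
  rw [opI_eq, opI_eq, ← weightedShift_zero]
  refine weightedShift_commutator rfl ?_
  simp only [map_mul, shift_C]
  ring

end

theorem stmt15_general (lam sig eta : ℂ) (hlam : lam ≠ 0) (m n : ℤ) :
    opL lam eta m ∘ₗ opL lam eta n - opL lam eta n ∘ₗ opL lam eta m
        = ((n : ℂ) - (m : ℂ)) • opL lam eta (m + n) ∧
    opL lam eta m ∘ₗ opH lam n - opH lam n ∘ₗ opL lam eta m
        = (n : ℂ) • opH lam (m + n) ∧
    opL lam eta m ∘ₗ opI lam sig n - opI lam sig n ∘ₗ opL lam eta m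
        = ((n : ℂ) - (m : ℂ)) • opI lam sig (m + n) ∧
    opH lam m ∘ₗ opI lam sig n - opI lam sig n ∘ₗ opH lam m = opI lam sig (m + n) ∧
    opH lam m ∘ₗ opH lam n - opH lam n ∘ₗ opH lam m = 0 ∧
    opI lam sig m ∘ₗ opI lam sig n - opI lam sig n ∘ₗ opI lam sig m = 0 :=
  ⟨opL_commutator_opL hlam m n, opL_commutator_opH hlam m n,
    opL_commutator_opI hlam m n, opH_commutator_opI hlam m n, opH_commutator_opH m n,
    opI_commutator_opI m n⟩

theorem stmt15 (lam sig eta : ℂ) (hlam : lam ≠ 0) (hsig : sig ≠ 0) (m n : ℤ) :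
    opL lam eta m ∘ₗ opL lam eta n - opL lam eta n ∘ₗ opL lam eta m
        = ((n : ℂ) - (m : ℂ)) • opL lam eta (m + n) ∧
    opL lam eta m ∘ₗ opH lam n - opH lam n ∘ₗ opL lam eta m
        = (n : ℂ) • opH lam (m + n) ∧
    opL lam eta m ∘ₗ opI lam sig n - opI lam sig n ∘ₗ opL lam eta m
        = ((n : ℂ) - (m : ℂ)) • opI lam sig (m + n) ∧
    opH lam m ∘ₗ opI lam sig n - opI lam sig n ∘ₗ opH lam m = opI lam sig (m + n) ∧
    opH lam m ∘ₗ opH lam n - opH lam n ∘ₗ opH lam m = 0 ∧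
    opI lam sig m ∘ₗ opI lam sig n - opI lam sig n ∘ₗ opI lam sig m = 0 :=
  stmt15_general lam sig eta hlam m n
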